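/- arXiv:2011.12379 — 3 statements merged into one kernel-verified Lean document; each statement's English description precedes it below -/
import Mathlib

section
/- Let Y be integrable and Z a random variable, and let T be a {0,1}-valued random variable with P(T=1) > 0. Suppose Q(t, z) is a measurable function with Q(T, Z) = E[Y | T, Z] almost surely. If the potential outcomes Y(0), Y(1) satisfy Y = Y(T), Y(t) is independent of T given Z for t ∈ {0,1}, and 0 < P(T = 1 | Z) < 1 almost surely, then E[Y(1) − Y(0) | T = 1] = E[Q(1, Z) − Q(0, Z) | T = 1]. -/
/-! On the treated set `{T = 1}` consistency gives `Y = Y(1)`, and `{T = 1}` is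
`σ(T, Z)`-measurable, so `∫_{T=1} Y(1) = ∫_{T=1} E[Y | T, Z] = ∫_{T=1} Q(1, Z)`. The same argument
on the control set gives `E[Y(0) 1{T≠1} | Z] = Q(0, Z) P(T ≠ 1 | Z)`, while ignorability (extended
from bounded to integrable outcomes by truncation) gives
`E[Y(0) 1{T≠1} | Z] = E[Y(0) | Z] P(T ≠ 1 | Z)`. Overlap lets us cancel `P(T ≠ 1 | Z)`, so
`E[Y(0) | Z] = Q(0, Z)`; hence `∫ Y(0) = ∫ Q(0, Z)`, and removing the control part gives
`∫_{T=1} Y(0) = ∫_{T=1} Q(0, Z)`. -/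

open MeasureTheory ProbabilityTheory Filter Topology

def clip (n : ℕ) (x : ℝ) : ℝ := max (-n) (min n x)

lemma continuous_clip (n : ℕ) : Continuous (clip n) :=
  continuous_const.max (continuous_const.min continuous_id)

lemma abs_clip_le_abs (n : ℕ) (x : ℝ) : |clip n x| ≤ |x| := by
  unfold clip; grind [abs_le]

lemma abs_clip_le (n : ℕ) (x : ℝ) : |clip n x| ≤ n := by
  unfold clip; grind [abs_le]

lemma tendsto_clip (x : ℝ) : Tendsto (fun n : ℕ => clip n x) atTop (𝓝 x) := by
  refine tendsto_atTop_of_eventually_const (i₀ := ⌈|x|⌉₊) fun n hn => ?_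
  have hx : |x| ≤ n := (Nat.le_ceil _).trans (by exact_mod_cast hn)
  unfold clip; grind [abs_le]

section CondExp

variable {α : Type*} {m m' m0 : MeasurableSpace α} {μ : Measure α}

lemma condExp_mul_eq_mul_condExp_of_clip (hm : m ≤ m0) {W B : α → ℝ} {C : ℝ}
    (hW : Integrable W μ) (hB : AEStronglyMeasurable B μ) (hBC : ∀ᵐ ω ∂μ, |B ω| ≤ C)
    (h : ∀ n : ℕ, μ[(clip n ∘ W) * B | m] =ᵐ[μ] μ[clip n ∘ W | m] * μ[B | m]) :
    μ[W * B | m] =ᵐ[μ] μ[W | m] * μ[B | m] := by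
  have hBC' : ∀ᵐ ω ∂μ, |μ[B | m] ω| ≤ C := ae_bdd_abs_condExp_of_ae_bdd_abs hBC
  have hclip : ∀ n, Integrable (clip n ∘ W) μ := fun n =>
    hW.mono ((continuous_clip n).comp_aestronglyMeasurable hW.1)
      (ae_of_all _ fun ω => by simpa using abs_clip_le_abs n (W ω))
  have hmulB : ∀ {V}, Integrable V μ → Integrable (V * B) μ := fun hV =>
    hV.mul_bdd hB (by simpa using hBC)
  have hmulB' : ∀ {V}, Integrable V μ → Integrable (V * μ[B | m]) μ := fun hV =>
    hV.mul_bdd (stronglyMeasurable_condExp.mono hm).aestronglyMeasurable (by simpa using hBC')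
  have hpull : ∀ {V}, Integrable V μ → μ[V * μ[B | m] | m] =ᵐ[μ] μ[V | m] * μ[B | m] :=
    fun hV => condExp_mul_of_stronglyMeasurable_right stronglyMeasurable_condExp (hmulB' hV) hV
  have hbound : ∀ (n : ℕ) (b : α → ℝ), (∀ᵐ ω ∂μ, |b ω| ≤ C) →
      ∀ᵐ ω ∂μ, ‖(clip n ∘ W * b) ω‖ ≤ |W ω| * C := fun n b hb => by
    filter_upwards [hb] with ω hω
    simpa [abs_mul] using mul_le_mul (abs_clip_le_abs n (W ω)) hω (abs_nonneg _) (abs_nonneg _)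
  -- `clip n ∘ W * B` and `clip n ∘ W * μ[B | m]` have the same conditional expectation by `h` and
  -- the pull-out property; dominated convergence passes this to the limits `W * B`, `W * μ[B | m]`.
  refine (tendsto_condExp_unique _ _ _ _ (fun n => hmulB (hclip n)) (fun n => hmulB' (hclip n))
    (ae_of_all _ fun ω => (tendsto_clip (W ω)).mul_const (B ω))
    (ae_of_all _ fun ω => (tendsto_clip (W ω)).mul_const (μ[B | m] ω))
    _ (hW.abs.mul_const C) _ (hW.abs.mul_const C) (fun n => hbound n B hBC)
    (fun n => hbound n _ hBC') fun n => (h n).trans (hpull (hclip n)).symm).trans (hpull hW)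

lemma condExp_mul_indicator_comp_eq_of_bounded_indep (hm : m ≤ m0) {W T : α → ℝ}
    (hW : Integrable W μ) (hT : Measurable T) {s : Set ℝ} (hs : MeasurableSet s)
    (hindep : ∀ f g : ℝ → ℝ, Measurable f → Measurable g →
      (∃ C : ℝ, ∀ x, |f x| ≤ C) → (∃ C : ℝ, ∀ x, |g x| ≤ C) →
      μ[fun ω => f (W ω) * g (T ω) | m]
        =ᵐ[μ] fun ω => μ[fun ω' => f (W ω') | m] ω * μ[fun ω' => g (T ω') | m] ω) :
    μ[W * (T ⁻¹' s).indicator 1 | m] =ᵐ[μ] μ[W | m] * μ[(T ⁻¹' s).indicator 1 | m] := by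
  refine condExp_mul_eq_mul_condExp_of_clip hm hW
    ((measurable_const.indicator (hT hs)).aestronglyMeasurable) (C := 1)
    (ae_of_all _ fun ω => ?_) fun n => ?_
  · by_cases hω : ω ∈ T ⁻¹' s <;> simp [hω]
  · exact hindep (clip n) (s.indicator 1) (continuous_clip n).measurable
      (measurable_one.indicator hs) ⟨n, abs_clip_le n⟩
      ⟨1, fun x => by by_cases hx : x ∈ s <;> simp [hx]⟩

lemma condExp_indicator_compl_one [IsFiniteMeasure μ] (hm : m ≤ m0) {s : Set α}
    (hs : MeasurableSet s) :
    μ[sᶜ.indicator (1 : α → ℝ) | m] =ᵐ[μ] 1 - μ[s.indicator 1 | m] := by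
  rw [Set.indicator_compl]
  have := condExp_sub (μ := μ) (integrable_const (1 : ℝ)) ((integrable_const 1).indicator hs) m
  rwa [condExp_const hm] at this

lemma setIntegral_eq_of_condExp_eq_on (hm : m ≤ m0) [SigmaFinite (μ.trim hm)] {S : Set α}
    (hS : MeasurableSet[m] S) {Y X q : α → ℝ} (hY : Integrable Y μ) (hYX : S.EqOn Y X)
    (hYq : ∀ᵐ ω ∂μ, ω ∈ S → μ[Y | m] ω = q ω) :
    ∫ ω in S, X ω ∂μ = ∫ ω in S, q ω ∂μ := calc
  ∫ ω in S, X ω ∂μ = ∫ ω in S, Y ω ∂μ := setIntegral_congr_fun (hm S hS) hYX.symm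
  _ = ∫ ω in S, μ[Y | m] ω ∂μ := (setIntegral_condExp hm hY hS).symm
  _ = ∫ ω in S, q ω ∂μ := setIntegral_congr_ae (hm S hS) hYq

lemma condExp_eq_of_condExp_eq_on [IsFiniteMeasure μ] (hmm' : m ≤ m') (hm' : m' ≤ m0)
    {S : Set α} (hS : MeasurableSet[m'] S) {Y X q : α → ℝ} (hY : Integrable Y μ)
    (hq : StronglyMeasurable[m] q) (hq_int : Integrable q μ) (hYX : S.EqOn Y X)
    (hYq : ∀ᵐ ω ∂μ, ω ∈ S → μ[Y | m'] ω = q ω)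
    (hindep : μ[X * S.indicator 1 | m] =ᵐ[μ] μ[X | m] * μ[S.indicator 1 | m])
    (hpos : ∀ᵐ ω ∂μ, μ[S.indicator (1 : α → ℝ) | m] ω ≠ 0) :
    μ[X | m] =ᵐ[μ] q := by
  have hmul_indicator : ∀ f : α → ℝ, f * S.indicator 1 = S.indicator f := fun f => by
    ext ω; by_cases hω : ω ∈ S <;> simp [hω]
  have hq_indicator : μ[X * S.indicator 1 | m] =ᵐ[μ] q * μ[S.indicator 1 | m] := calc
    μ[X * S.indicator 1 | m] = μ[S.indicator Y | m] := by
      rw [hmul_indicator, Set.indicator_congr hYX.symm]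
    _ =ᵐ[μ] μ[μ[S.indicator Y | m'] | m] := (condExp_condExp_of_le hmm' hm').symm
    _ =ᵐ[μ] μ[S.indicator (μ[Y | m']) | m] := condExp_congr_ae (condExp_indicator hY hS)
    _ =ᵐ[μ] μ[S.indicator q | m] := by
      refine condExp_congr_ae ?_
      filter_upwards [hYq] with ω hω
      by_cases hωS : ω ∈ S <;> simp [hωS, hω]
    _ =ᵐ[μ] q * μ[S.indicator 1 | m] := by
      rw [← hmul_indicator]
      have hS₀ := hm' S hS
      refine condExp_mul_of_stronglyMeasurable_left hq ?_ ((integrable_const 1).indicator hS₀)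
      rw [hmul_indicator]
      exact hq_int.indicator hS₀
  filter_upwards [hindep, hq_indicator, hpos] with ω h₁ h₂ h₃
  exact mul_right_cancel₀ h₃ (h₁.symm.trans h₂)

lemma setIntegral_sub_eq_of_condExp_eq_on [IsFiniteMeasure μ] (hmm' : m ≤ m') (hm' : m' ≤ m0)
    {A : Set α} (hA : MeasurableSet[m'] A) {Y Y₀ Y₁ q₀ q₁ : α → ℝ} (hY : Integrable Y μ)
    (hY₀ : Integrable Y₀ μ) (hY₁ : Integrable Y₁ μ) (hq₀_meas : StronglyMeasurable[m] q₀)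
    (hq₀ : Integrable q₀ μ) (hq₁ : Integrable q₁ μ) (hYY₁ : A.EqOn Y Y₁) (hYY₀ : Aᶜ.EqOn Y Y₀)
    (hYq₁ : ∀ᵐ ω ∂μ, ω ∈ A → μ[Y | m'] ω = q₁ ω) (hYq₀ : ∀ᵐ ω ∂μ, ω ∈ Aᶜ → μ[Y | m'] ω = q₀ ω)
    (hindep : μ[Y₀ * Aᶜ.indicator 1 | m] =ᵐ[μ] μ[Y₀ | m] * μ[Aᶜ.indicator 1 | m])
    (hpos : ∀ᵐ ω ∂μ, μ[Aᶜ.indicator (1 : α → ℝ) | m] ω ≠ 0) :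
    ∫ ω in A, (Y₁ ω - Y₀ ω) ∂μ = ∫ ω in A, (q₁ ω - q₀ ω) ∂μ := by
  have htreated := setIntegral_eq_of_condExp_eq_on hm' hA hY hYY₁ hYq₁
  have hcontrol := setIntegral_eq_of_condExp_eq_on hm' hA.compl hY hYY₀ hYq₀
  have hident : μ[Y₀ | m] =ᵐ[μ] q₀ :=
    condExp_eq_of_condExp_eq_on hmm' hm' hA.compl hY hq₀_meas hq₀ hYY₀ hYq₀ hindep hpos
  have htotal : ∫ ω, Y₀ ω ∂μ = ∫ ω, q₀ ω ∂μ :=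
    (integral_condExp (hmm'.trans hm')).symm.trans (integral_congr_ae hident)
  have := integral_add_compl (hm' A hA) hY₀
  have := integral_add_compl (hm' A hA) hq₀
  rw [integral_sub hY₁.restrict hY₀.restrict, integral_sub hq₁.restrict hq₀.restrict, htreated]
  linarith

end CondExp

theorem att_backdoor_identification_general
    {Ω 𝒵 : Type*} [MeasurableSpace Ω] [MeasurableSpace 𝒵]
    (μ : Measure Ω) [IsProbabilityMeasure μ]
    (T : Ω → ℝ) (hTmeas : Measurable T) (hT01 : ∀ ω, T ω = 0 ∨ T ω = 1)
    (Z : Ω → 𝒵) (hZ : Measurable Z)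
    (Y Y0 Y1 : Ω → ℝ)
    (hYint : Integrable Y μ) (hY0int : Integrable Y0 μ) (hY1int : Integrable Y1 μ)
    -- consistency: Y = Y(T)
    (hconsistency : ∀ ω, Y ω = if T ω = 1 then Y1 ω else Y0 ω)
    -- conditional ignorability: Y(t) ⟂ T | Z for t ∈ {0,1}
    (hignore : ∀ Yt, (Yt = Y0 ∨ Yt = Y1) →
      ∀ f g : ℝ → ℝ, Measurable f → Measurable g →
        (∃ C : ℝ, ∀ x, |f x| ≤ C) → (∃ C : ℝ, ∀ x, |g x| ≤ C) →
        μ[(fun ω => f (Yt ω) * g (T ω)) | MeasurableSpace.comap Z ‹MeasurableSpace 𝒵›]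
          =ᵐ[μ] fun ω =>
            (μ[(fun ω' => f (Yt ω')) | MeasurableSpace.comap Z ‹MeasurableSpace 𝒵›]) ω
            * (μ[(fun ω' => g (T ω')) | MeasurableSpace.comap Z ‹MeasurableSpace 𝒵›]) ω)
    -- overlap: 0 < P(T=1 | Z) < 1 a.s.
    (hoverlap : ∀ᵐ ω ∂μ,
      0 < (μ[(fun ω' => if T ω' = 1 then (1 : ℝ) else 0) |
            MeasurableSpace.comap Z ‹MeasurableSpace 𝒵›]) ω ∧
      (μ[(fun ω' => if T ω' = 1 then (1 : ℝ) else 0) |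
            MeasurableSpace.comap Z ‹MeasurableSpace 𝒵›]) ω < 1)
    (Q : ℝ × 𝒵 → ℝ) (hQmeas : Measurable Q)
    (hQ : (fun ω => Q (T ω, Z ω))
        =ᵐ[μ] μ[Y | MeasurableSpace.comap (fun ω => (T ω, Z ω)) inferInstance])
    (hQ1int : Integrable (fun ω => Q (1, Z ω)) μ)
    (hQ0int : Integrable (fun ω => Q (0, Z ω)) μ) :
    ∫ ω, (Y1 ω - Y0 ω) ∂(μ[|{ω | T ω = 1}])
      = ∫ ω, (Q (1, Z ω) - Q (0, Z ω)) ∂(μ[|{ω | T ω = 1}]) := by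
  have hTZ : MeasurableSpace.comap (fun ω => (T ω, Z ω)) inferInstance ≤ ‹MeasurableSpace Ω› :=
    (hTmeas.prodMk hZ).comap_le
  set mZ := MeasurableSpace.comap Z ‹MeasurableSpace 𝒵›
  set mTZ : MeasurableSpace Ω := MeasurableSpace.comap (fun ω => (T ω, Z ω)) inferInstance
  have hZ_TZ : mZ ≤ mTZ :=
    (measurable_snd.comp (comap_measurable (fun ω => (T ω, Z ω)))).comap_le
  set A := {ω | T ω = 1}
  have hA : MeasurableSet[mTZ] A :=
    measurable_fst.comp (comap_measurable _) (measurableSet_singleton 1)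
  have hQon : ∀ t, ∀ᵐ ω ∂μ, ω ∈ {ω | T ω = t} → μ[Y | mTZ] ω = Q (t, Z ω) := by
    intro t
    filter_upwards [hQ] with ω hω hT
    rw [← hω, hT]
  have hpos : ∀ᵐ ω ∂μ, μ[Aᶜ.indicator (1 : Ω → ℝ) | mZ] ω ≠ 0 := by
    have hpropensity : (fun ω => if T ω = 1 then (1 : ℝ) else 0) = A.indicator 1 := by
      ext ω; simp [A, Set.indicator_apply]
    rw [hpropensity] at hoverlap
    filter_upwards [condExp_indicator_compl_one hZ.comap_le (hTZ _ hA), hoverlap] with ω h hov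
    rw [h]
    exact (sub_pos.2 hov.2).ne'
  rw [ProbabilityTheory.cond, integral_smul_measure, integral_smul_measure]
  congr 1
  exact setIntegral_sub_eq_of_condExp_eq_on hZ_TZ hTZ hA hYint hY0int hY1int
    (hQmeas.comp (measurable_const.prodMk (comap_measurable Z))).stronglyMeasurable hQ0int hQ1int
    (fun ω hω => (hconsistency ω).trans (if_pos hω))
    (fun ω hω => (hconsistency ω).trans (if_neg hω))
    (hQon 1) ((hQon 0).mono fun ω h hω => h ((hT01 ω).resolve_right hω))
    (condExp_mul_indicator_comp_eq_of_bounded_indep hZ.comap_le hY0int hTmeas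
      (measurableSet_singleton 1).compl (hignore Y0 (Or.inl rfl))) hpos

/-- Backdoor identification of the ATT: under consistency, conditional
ignorability of the potential outcomes `Y0, Y1` given `Z`, and overlap,
`E[Y(1) - Y(0) | T = 1] = E[Q(1,Z) - Q(0,Z) | T = 1]`, where
`Q(T,Z) = E[Y | T, Z]` almost surely. -/
theorem att_backdoor_identification
    {Ω 𝒵 : Type*} [MeasurableSpace Ω] [MeasurableSpace 𝒵]
    (μ : Measure Ω) [IsProbabilityMeasure μ]
    (T : Ω → ℝ) (hTmeas : Measurable T) (hT01 : ∀ ω, T ω = 0 ∨ T ω = 1)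
    (hTpos : 0 < μ {ω | T ω = 1})
    (Z : Ω → 𝒵) (hZ : Measurable Z)
    (Y Y0 Y1 : Ω → ℝ)
    (hYint : Integrable Y μ) (hY0int : Integrable Y0 μ) (hY1int : Integrable Y1 μ)
    -- consistency: Y = Y(T)
    (hconsistency : ∀ ω, Y ω = if T ω = 1 then Y1 ω else Y0 ω)
    -- conditional ignorability: Y(t) ⟂ T | Z for t ∈ {0,1}
    (hignore : ∀ Yt, (Yt = Y0 ∨ Yt = Y1) →
      ∀ f g : ℝ → ℝ, Measurable f → Measurable g →
        (∃ C : ℝ, ∀ x, |f x| ≤ C) → (∃ C : ℝ, ∀ x, |g x| ≤ C) →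
        μ[(fun ω => f (Yt ω) * g (T ω)) | MeasurableSpace.comap Z ‹MeasurableSpace 𝒵›]
          =ᵐ[μ] fun ω =>
            (μ[(fun ω' => f (Yt ω')) | MeasurableSpace.comap Z ‹MeasurableSpace 𝒵›]) ω
            * (μ[(fun ω' => g (T ω')) | MeasurableSpace.comap Z ‹MeasurableSpace 𝒵›]) ω)
    -- overlap: 0 < P(T=1 | Z) < 1 a.s.
    (hoverlap : ∀ᵐ ω ∂μ,
      0 < (μ[(fun ω' => if T ω' = 1 then (1 : ℝ) else 0) |
            MeasurableSpace.comap Z ‹MeasurableSpace 𝒵›]) ω ∧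
      (μ[(fun ω' => if T ω' = 1 then (1 : ℝ) else 0) |
            MeasurableSpace.comap Z ‹MeasurableSpace 𝒵›]) ω < 1)
    (Q : ℝ × 𝒵 → ℝ) (hQmeas : Measurable Q)
    (hQ : (fun ω => Q (T ω, Z ω))
        =ᵐ[μ] μ[Y | MeasurableSpace.comap (fun ω => (T ω, Z ω)) inferInstance])
    (hQ1int : Integrable (fun ω => Q (1, Z ω)) μ)
    (hQ0int : Integrable (fun ω => Q (0, Z ω)) μ) :
    ∫ ω, (Y1 ω - Y0 ω) ∂(μ[|{ω | T ω = 1}])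
      = ∫ ω, (Q (1, Z ω) - Q (0, Z ω)) ∂(μ[|{ω | T ω = 1}]) :=
  att_backdoor_identification_general μ T hTmeas hT01 Z hZ Y Y0 Y1 hYint hY0int hY1int hconsistency
    hignore hoverlap Q hQmeas hQ hQ1int hQ0int
end

section
/- Let μ₁, μ₂ be probability measures on a measurable space, and let Y, Φ be measurable real-valued functions such that the conditional expectation of Y given Φ is the same measurable function h under both μ₁ and μ₂ (i.e., E_{μᵢ}[Y | Φ] = h(Φ) μᵢ-a.s. for i = 1, 2). Then for any λ ∈ [0,1], under the mixture measure μ = λ·μ₁ + (1−λ)·μ₂, E_μ[Y | Φ] = h(Φ) μ-a.s., assuming Y is integrable under both measures. -/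
open MeasureTheory

/-! A candidate `g` for `μ[f | m]` is determined by its set integrals over `m`-measurable sets,
and these set integrals depend linearly on the measure. Hence if `g` has the right set
integrals under `μ₁` and `μ₂`, it has them under every mixture `a • μ₁ + b • μ₂`. -/

namespace MeasureTheory

variable {Ω E : Type*} [NormedAddCommGroup E] [NormedSpace ℝ E] [CompleteSpace E]
  {m m₀ : MeasurableSpace Ω} {μ ν : Measure Ω} {f g : Ω → E}

theorem condExp_ae_eq_iff_forall_setIntegral_eq (hm : m ≤ m₀) [IsFiniteMeasure μ]
    (hf : Integrable f μ) (hg : StronglyMeasurable[m] g) (hg_int : Integrable g μ) :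
    μ[f | m] =ᵐ[μ] g ↔ ∀ s, MeasurableSet[m] s → ∫ x in s, g x ∂μ = ∫ x in s, f x ∂μ := by
  refine ⟨fun hfg s hs => ?_, fun hfg => ?_⟩
  · rw [← setIntegral_condExp hm hf hs]
    exact setIntegral_congr_ae (hm s hs) (hfg.mono fun x hx _ => hx.symm)
  · exact (ae_eq_condExp_of_forall_setIntegral_eq hm hf (fun _ _ _ => hg_int.integrableOn)
      (fun s hs _ => hfg s hs) hg.aestronglyMeasurable).symm

theorem condExp_smul_measure_ae_eq (hm : m ≤ m₀) [IsFiniteMeasure μ] {c : ENNReal}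
    (hc : c ≠ ⊤) (hf : Integrable f μ) (hg : StronglyMeasurable[m] g)
    (hfg : μ[f | m] =ᵐ[μ] g) : (c • μ)[f | m] =ᵐ[c • μ] g := by
  have := μ.smul_finite hc
  have hg_int : Integrable g μ := integrable_condExp.congr hfg
  rw [condExp_ae_eq_iff_forall_setIntegral_eq hm hf hg hg_int] at hfg
  rw [condExp_ae_eq_iff_forall_setIntegral_eq hm (hf.smul_measure hc) hg
    (hg_int.smul_measure hc)]
  intro s hs
  simp only [Measure.restrict_smul, integral_smul_measure, hfg s hs]

theorem condExp_add_measure_ae_eq (hm : m ≤ m₀) [IsFiniteMeasure μ] [IsFiniteMeasure ν]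
    (hfμ : Integrable f μ) (hfν : Integrable f ν) (hg : StronglyMeasurable[m] g)
    (hμ : μ[f | m] =ᵐ[μ] g) (hν : ν[f | m] =ᵐ[ν] g) : (μ + ν)[f | m] =ᵐ[μ + ν] g := by
  have hgμ : Integrable g μ := integrable_condExp.congr hμ
  have hgν : Integrable g ν := integrable_condExp.congr hν
  rw [condExp_ae_eq_iff_forall_setIntegral_eq hm hfμ hg hgμ] at hμ
  rw [condExp_ae_eq_iff_forall_setIntegral_eq hm hfν hg hgν] at hν
  rw [condExp_ae_eq_iff_forall_setIntegral_eq hm (hfμ.add_measure hfν) hg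
    (hgμ.add_measure hgν)]
  intro s hs
  rw [Measure.restrict_add, integral_add_measure hgμ.integrableOn hgν.integrableOn,
    integral_add_measure hfμ.integrableOn hfν.integrableOn, hμ s hs, hν s hs]

end MeasureTheory

theorem invariance_preserved_under_mixture_general
    {Ω : Type*} [MeasurableSpace Ω]
    (μ₁ μ₂ : Measure Ω) [IsProbabilityMeasure μ₁] [IsProbabilityMeasure μ₂]
    (Y : Ω → ℝ) (Φ : Ω → ℝ) (hΦ : Measurable Φ)
    (hYint₁ : Integrable Y μ₁) (hYint₂ : Integrable Y μ₂)
    (h : ℝ → ℝ) (hh : Measurable h)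
    (h₁ : μ₁[Y | MeasurableSpace.comap Φ Real.measurableSpace] =ᵐ[μ₁] h ∘ Φ)
    (h₂ : μ₂[Y | MeasurableSpace.comap Φ Real.measurableSpace] =ᵐ[μ₂] h ∘ Φ)
    (l : ℝ) :
    (ENNReal.ofReal l • μ₁ + ENNReal.ofReal (1 - l) • μ₂)[Y |
        MeasurableSpace.comap Φ Real.measurableSpace]
      =ᵐ[ENNReal.ofReal l • μ₁ + ENNReal.ofReal (1 - l) • μ₂] h ∘ Φ := by
  have hm := hΦ.comap_le
  have hg : StronglyMeasurable[MeasurableSpace.comap Φ Real.measurableSpace] (h ∘ Φ) :=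
    (hh.comp (comap_measurable Φ)).stronglyMeasurable
  have := μ₁.smul_finite (ENNReal.ofReal_ne_top (r := l))
  have := μ₂.smul_finite (ENNReal.ofReal_ne_top (r := 1 - l))
  exact condExp_add_measure_ae_eq hm (hYint₁.smul_measure ENNReal.ofReal_ne_top)
    (hYint₂.smul_measure ENNReal.ofReal_ne_top) hg
    (condExp_smul_measure_ae_eq hm ENNReal.ofReal_ne_top hYint₁ hg h₁)
    (condExp_smul_measure_ae_eq hm ENNReal.ofReal_ne_top hYint₂ hg h₂)

/-- Invariance of a representation is preserved under mixtures of environments: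
if `E[Y | Φ] = h(Φ)` a.s. under both `μ₁` and `μ₂`, then the same holds under
the mixture `λ·μ₁ + (1-λ)·μ₂`. -/
theorem invariance_preserved_under_mixture
    {Ω : Type*} [MeasurableSpace Ω]
    (μ₁ μ₂ : Measure Ω) [IsProbabilityMeasure μ₁] [IsProbabilityMeasure μ₂]
    (Y : Ω → ℝ) (hYmeas : Measurable Y) (Φ : Ω → ℝ) (hΦ : Measurable Φ)
    (hYint₁ : Integrable Y μ₁) (hYint₂ : Integrable Y μ₂)
    (h : ℝ → ℝ) (hh : Measurable h)
    (h₁ : μ₁[Y | MeasurableSpace.comap Φ Real.measurableSpace] =ᵐ[μ₁] h ∘ Φ)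
    (h₂ : μ₂[Y | MeasurableSpace.comap Φ Real.measurableSpace] =ᵐ[μ₂] h ∘ Φ)
    (l : ℝ) (hl0 : 0 ≤ l) (hl1 : l ≤ 1) :
    (ENNReal.ofReal l • μ₁ + ENNReal.ofReal (1 - l) • μ₂)[Y |
        MeasurableSpace.comap Φ Real.measurableSpace]
      =ᵐ[ENNReal.ofReal l • μ₁ + ENNReal.ofReal (1 - l) • μ₂] h ∘ Φ :=
  invariance_preserved_under_mixture_general μ₁ μ₂ Y Φ hΦ hYint₁ hYint₂ h hh h₁ h₂ l
end

section
/- Let Ω be a finite probability space, and let T, Y, C, D be {0,1}-valued random variables such that T and Y are independent, D is conditionally independent of (T, Y) given C, and P(C=c) > 0, P(D=d) > 0 for all c, d ∈ {0,1}. For Z ∈ {C, D} and z ∈ {0,1} let Δ(Z=z) := cov(T,Y|Z=z) − cov(T,Y). Then for each d ∈ {0,1}: Δ(D=d) = [(P(D=d|C=1) − P(D=d|C=0))/P(D=d)²]·[P(D=d|C=1)·P(C=1)²·Δ(C=1) − P(D=d|C=0)·P(C=0)²·Δ(C=0)]. -/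
open MeasureTheory ProbabilityTheory

namespace ColliderYBias

variable {Ω : Type*} [MeasurableSpace Ω]

/-- `P(s)` as a real number. -/
noncomputable def pr (μ : Measure Ω) (s : Set Ω) : ℝ := (μ s).toReal

/-- Conditional covariance `cov(T, Y | s)` given an event `s`. -/
noncomputable def ccov (μ : Measure Ω) (T Y : Ω → ℝ) (s : Set Ω) : ℝ :=
  (∫ ω, T ω * Y ω ∂(μ[|s])) - (∫ ω, T ω ∂(μ[|s])) * (∫ ω, Y ω ∂(μ[|s]))

/-- Marginal covariance `cov(T, Y)`. -/
noncomputable def cov (μ : Measure Ω) (T Y : Ω → ℝ) : ℝ :=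
  (∫ ω, T ω * Y ω ∂μ) - (∫ ω, T ω ∂μ) * (∫ ω, Y ω ∂μ)

/-- Collider bias `Δ(s) = cov(T,Y | s) - cov(T,Y)` of conditioning on event `s`. -/
noncomputable def Δ (μ : Measure Ω) (T Y : Ω → ℝ) (s : Set Ω) : ℝ :=
  ccov μ T Y s - cov μ T Y

/-- Conditional probability `P(s | t)` as a ratio of reals. -/
noncomputable def cpr (μ : Measure Ω) (s t : Set Ω) : ℝ := pr μ (s ∩ t) / pr μ t

lemma integral_eq_pr (ν : Measure Ω) (f : Ω → ℝ) (hf : Measurable f)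
    (hf01 : ∀ ω, f ω = 0 ∨ f ω = 1) :
    ∫ ω, f ω ∂ν = pr ν {ω | f ω = 1} := by
  have hset : MeasurableSet {ω | f ω = 1} := hf (measurableSet_singleton 1)
  have hfi : f = Set.indicator {ω | f ω = 1} (1 : Ω → ℝ) := by
    funext ω
    rcases hf01 ω with h | h
    · simp [Set.indicator_apply, Set.mem_setOf_eq, h]
    · simp [Set.indicator_apply, Set.mem_setOf_eq, h]
  calc ∫ ω, f ω ∂ν = ∫ ω, Set.indicator {ω | f ω = 1} (1 : Ω → ℝ) ω ∂ν := by rw [← hfi]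
  _ = (ν {ω | f ω = 1}).toReal := integral_indicator_one hset

lemma pr_cond (μ : Measure Ω) [IsFiniteMeasure μ] {s : Set Ω} (hs : MeasurableSet s)
    (t : Set Ω) : pr (μ[|s]) t = pr μ (t ∩ s) / pr μ s := by
  rw [pr, cond_apply hs, ENNReal.toReal_mul, ENNReal.toReal_inv, Set.inter_comm s t]
  rw [pr, pr, inv_mul_eq_div]

lemma integral_cond_eq (μ : Measure Ω) [IsFiniteMeasure μ] {s : Set Ω} (hs : MeasurableSet s)
    (f : Ω → ℝ) (hf : Measurable f) (hf01 : ∀ ω, f ω = 0 ∨ f ω = 1) :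
    ∫ ω, f ω ∂(μ[|s]) = pr μ ({ω | f ω = 1} ∩ s) / pr μ s := by
  rw [integral_eq_pr _ f hf hf01, pr_cond μ hs]

lemma ccov_eq (μ : Measure Ω) [IsFiniteMeasure μ] {T Y : Ω → ℝ}
    (hTmeas : Measurable T) (hYmeas : Measurable Y)
    (hT01 : ∀ ω, T ω = 0 ∨ T ω = 1) (hY01 : ∀ ω, Y ω = 0 ∨ Y ω = 1)
    {s : Set Ω} (hs : MeasurableSet s) :
    ccov μ T Y s
      = pr μ ({ω | T ω = 1} ∩ {ω | Y ω = 1} ∩ s) / pr μ s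
        - pr μ ({ω | T ω = 1} ∩ s) * pr μ ({ω | Y ω = 1} ∩ s) / (pr μ s) ^ 2 := by
  have hTY01 : ∀ ω, T ω * Y ω = 0 ∨ T ω * Y ω = 1 := by
    intro ω; rcases hT01 ω with h | h <;> rcases hY01 ω with h' | h' <;> simp [h, h']
  have hseteq : {ω | T ω * Y ω = 1} = {ω | T ω = 1} ∩ {ω | Y ω = 1} := by
    ext ω; rcases hT01 ω with h | h <;> rcases hY01 ω with h' | h' <;> simp [h, h']
  unfold ccov
  rw [integral_cond_eq μ hs (fun ω => T ω * Y ω) (hTmeas.mul hYmeas) hTY01,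
    integral_cond_eq μ hs T hTmeas hT01, integral_cond_eq μ hs Y hYmeas hY01, hseteq]
  ring

lemma cov_eq (μ : Measure Ω) {T Y : Ω → ℝ}
    (hTmeas : Measurable T) (hYmeas : Measurable Y)
    (hT01 : ∀ ω, T ω = 0 ∨ T ω = 1) (hY01 : ∀ ω, Y ω = 0 ∨ Y ω = 1) :
    cov μ T Y = pr μ ({ω | T ω = 1} ∩ {ω | Y ω = 1}) - pr μ {ω | T ω = 1} * pr μ {ω | Y ω = 1} := by
  have hTY01 : ∀ ω, T ω * Y ω = 0 ∨ T ω * Y ω = 1 := by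
    intro ω; rcases hT01 ω with h | h <;> rcases hY01 ω with h' | h' <;> simp [h, h']
  have hseteq : {ω | T ω * Y ω = 1} = {ω | T ω = 1} ∩ {ω | Y ω = 1} := by
    ext ω; rcases hT01 ω with h | h <;> rcases hY01 ω with h' | h' <;> simp [h, h']
  unfold cov
  rw [integral_eq_pr μ (fun ω => T ω * Y ω) (hTmeas.mul hYmeas) hTY01,
    integral_eq_pr μ T hTmeas hT01, integral_eq_pr μ Y hYmeas hY01, hseteq]

lemma pr_split (μ : Measure Ω) [IsFiniteMeasure μ] {g : Ω → ℝ} (hg : Measurable g)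
    (hg01 : ∀ ω, g ω = 0 ∨ g ω = 1) {A : Set Ω} (hA : MeasurableSet A) :
    pr μ A = pr μ (A ∩ {ω | g ω = 0}) + pr μ (A ∩ {ω | g ω = 1}) := by
  have hcover : A = (A ∩ {ω | g ω = 0}) ∪ (A ∩ {ω | g ω = 1}) := by
    ext ω; rcases hg01 ω with h | h <;> simp [h]
  have hdisj : Disjoint (A ∩ {ω | g ω = 0}) (A ∩ {ω | g ω = 1}) := by
    rw [Set.disjoint_left]
    rintro ω ⟨_, h0⟩ ⟨_, h1⟩
    simp only [Set.mem_setOf_eq] at h0 h1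
    rw [h0] at h1; norm_num at h1
  have hm : MeasurableSet (A ∩ {ω | g ω = 1}) := hA.inter (hg (measurableSet_singleton 1))
  have : μ A = μ (A ∩ {ω | g ω = 0}) + μ (A ∩ {ω | g ω = 1}) := by
    rw [← measure_union hdisj hm, ← hcover]
  rw [pr, this, ENNReal.toReal_add (measure_ne_top _ _) (measure_ne_top _ _)]
  rfl

set_option maxHeartbeats 2000000 in
/-- Corollary 2.1 (Nguyen et al.): in a Y-structure where `T ⟂ Y` marginally and
the descendant `D` satisfies `D ⟂ (T,Y) | C`, the Y-bias `Δ(D=d)` relates to the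
embedded V-bias `Δ(C=c)` via
`Δ(D=d) = [(P(D=d|C=1) - P(D=d|C=0))/P(D=d)²]
            ·[P(D=d|C=1)·P(C=1)²·Δ(C=1) - P(D=d|C=0)·P(C=0)²·Δ(C=0)]`. -/
theorem y_bias_from_embedded_v_bias
    [Fintype Ω] (μ : Measure Ω) [IsProbabilityMeasure μ]
    (T Y C D : Ω → ℝ)
    (hTmeas : Measurable T) (hYmeas : Measurable Y)
    (hCmeas : Measurable C) (hDmeas : Measurable D)
    (hT01 : ∀ ω, T ω = 0 ∨ T ω = 1) (hY01 : ∀ ω, Y ω = 0 ∨ Y ω = 1)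
    (hC01 : ∀ ω, C ω = 0 ∨ C ω = 1) (hD01 : ∀ ω, D ω = 0 ∨ D ω = 1)
    (hCpos : ∀ c : ℝ, c = 0 ∨ c = 1 → 0 < pr μ {ω | C ω = c})
    (hDpos : ∀ d : ℝ, d = 0 ∨ d = 1 → 0 < pr μ {ω | D ω = d})
    -- T and Y are marginally independent (C is a pure collider)
    (hTY : IndepFun T Y μ)
    -- D ⟂ (T, Y) | C, stated pointwise via factorization of conditional probabilities
    (hCI : ∀ c : ℝ, c = 0 ∨ c = 1 → ∀ d t y : ℝ,
      cpr μ ({ω | D ω = d} ∩ {ω | T ω = t} ∩ {ω | Y ω = y}) {ω | C ω = c}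
        = cpr μ {ω | D ω = d} {ω | C ω = c}
          * cpr μ ({ω | T ω = t} ∩ {ω | Y ω = y}) {ω | C ω = c}) :
    ∀ d : ℝ, d = 0 ∨ d = 1 →
      Δ μ T Y {ω | D ω = d}
        = ((cpr μ {ω | D ω = d} {ω | C ω = 1} - cpr μ {ω | D ω = d} {ω | C ω = 0})
            / (pr μ {ω | D ω = d}) ^ 2)
          * (cpr μ {ω | D ω = d} {ω | C ω = 1} * (pr μ {ω | C ω = 1}) ^ 2
                * Δ μ T Y {ω | C ω = 1}
             - cpr μ {ω | D ω = d} {ω | C ω = 0} * (pr μ {ω | C ω = 0}) ^ 2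
                * Δ μ T Y {ω | C ω = 0}) := by
  intro d hd
  have mT1 : MeasurableSet {ω | T ω = 1} := hTmeas (measurableSet_singleton 1)
  have mY1 : MeasurableSet {ω | Y ω = 1} := hYmeas (measurableSet_singleton 1)
  have mC0 : MeasurableSet {ω | C ω = 0} := hCmeas (measurableSet_singleton 0)
  have mC1 : MeasurableSet {ω | C ω = 1} := hCmeas (measurableSet_singleton 1)
  have mDd : MeasurableSet {ω | D ω = d} := hDmeas (measurableSet_singleton d)
  have hp0 := hCpos 0 (Or.inl rfl)
  have hp1 := hCpos 1 (Or.inr rfl)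
  have hpD := hDpos d hd
  have hp0' : pr μ {ω | C ω = 0} ≠ 0 := ne_of_gt hp0
  have hp1' : pr μ {ω | C ω = 1} ≠ 0 := ne_of_gt hp1
  -- independence of T and Y
  have hPTY : pr μ ({ω | T ω = 1} ∩ {ω | Y ω = 1})
      = pr μ {ω | T ω = 1} * pr μ {ω | Y ω = 1} := by
    have h := hTY.measure_inter_preimage_eq_mul ({1} : Set ℝ) ({1} : Set ℝ)
      (measurableSet_singleton 1) (measurableSet_singleton 1)
    simp only [pr]
    rw [show ({ω | T ω = 1} ∩ {ω | Y ω = 1} : Set Ω) = T ⁻¹' {1} ∩ Y ⁻¹' {1} from rfl, h,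
      ENNReal.toReal_mul]
    rfl
  have hcov : cov μ T Y = 0 := by
    rw [cov_eq μ hTmeas hYmeas hT01 hY01, hPTY]; ring
  -- conditional independence consequences
  have key : ∀ c : ℝ, c = 0 ∨ c = 1 →
      (pr μ (({ω | T ω = 1} ∩ {ω | D ω = d}) ∩ {ω | C ω = c}) * pr μ {ω | C ω = c}
        = pr μ ({ω | D ω = d} ∩ {ω | C ω = c}) * pr μ ({ω | T ω = 1} ∩ {ω | C ω = c}))
      ∧ (pr μ (({ω | Y ω = 1} ∩ {ω | D ω = d}) ∩ {ω | C ω = c}) * pr μ {ω | C ω = c}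
        = pr μ ({ω | D ω = d} ∩ {ω | C ω = c}) * pr μ ({ω | Y ω = 1} ∩ {ω | C ω = c}))
      ∧ (pr μ (({ω | T ω = 1} ∩ {ω | Y ω = 1} ∩ {ω | D ω = d}) ∩ {ω | C ω = c})
            * pr μ {ω | C ω = c}
        = pr μ ({ω | D ω = d} ∩ {ω | C ω = c})
            * pr μ ({ω | T ω = 1} ∩ {ω | Y ω = 1} ∩ {ω | C ω = c})) := by
    intro c hc
    have pc : 0 < pr μ {ω | C ω = c} := hCpos c hc
    have pcne : pr μ {ω | C ω = c} ≠ 0 := ne_of_gt pc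
    have mCc : MeasurableSet {ω | C ω = c} := hCmeas (measurableSet_singleton c)
    have base : ∀ t y : ℝ,
        pr μ (({ω | D ω = d} ∩ {ω | T ω = t} ∩ {ω | Y ω = y}) ∩ {ω | C ω = c})
            * pr μ {ω | C ω = c}
          = pr μ ({ω | D ω = d} ∩ {ω | C ω = c})
            * pr μ (({ω | T ω = t} ∩ {ω | Y ω = y}) ∩ {ω | C ω = c}) := by
      intro t y
      have h := hCI c hc d t y
      simp only [cpr] at h
      field_simp at h
      refine mul_right_cancel₀ pcne ?_
      linear_combination (pr μ {ω | C ω = c}) * h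
    constructor
    · -- T part: marginalize over Y
      have s1 : ∀ y : ℝ, (({ω | T ω = 1} ∩ {ω | D ω = d}) ∩ {ω | C ω = c}) ∩ {ω | Y ω = y}
          = ({ω | D ω = d} ∩ {ω | T ω = 1} ∩ {ω | Y ω = y}) ∩ {ω | C ω = c} := by
        intro y; ext ω; simp only [Set.mem_inter_iff, Set.mem_setOf_eq]; tauto
      have s2 : ∀ y : ℝ, ({ω | T ω = 1} ∩ {ω | C ω = c}) ∩ {ω | Y ω = y}
          = ({ω | T ω = 1} ∩ {ω | Y ω = y}) ∩ {ω | C ω = c} := by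
        intro y; ext ω; simp only [Set.mem_inter_iff, Set.mem_setOf_eq]; tauto
      calc pr μ (({ω | T ω = 1} ∩ {ω | D ω = d}) ∩ {ω | C ω = c}) * pr μ {ω | C ω = c}
          = (pr μ ((({ω | T ω = 1} ∩ {ω | D ω = d}) ∩ {ω | C ω = c}) ∩ {ω | Y ω = 0})
              + pr μ ((({ω | T ω = 1} ∩ {ω | D ω = d}) ∩ {ω | C ω = c}) ∩ {ω | Y ω = 1}))
              * pr μ {ω | C ω = c} := by
            rw [← pr_split μ hYmeas hY01 ((mT1.inter mDd).inter mCc)]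
        _ = (pr μ (({ω | D ω = d} ∩ {ω | T ω = 1} ∩ {ω | Y ω = 0}) ∩ {ω | C ω = c})
              + pr μ (({ω | D ω = d} ∩ {ω | T ω = 1} ∩ {ω | Y ω = 1}) ∩ {ω | C ω = c}))
              * pr μ {ω | C ω = c} := by rw [s1 0, s1 1]
        _ = pr μ ({ω | D ω = d} ∩ {ω | C ω = c})
              * (pr μ (({ω | T ω = 1} ∩ {ω | Y ω = 0}) ∩ {ω | C ω = c})
                + pr μ (({ω | T ω = 1} ∩ {ω | Y ω = 1}) ∩ {ω | C ω = c})) := by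
            rw [add_mul, base 1 0, base 1 1]; ring
        _ = pr μ ({ω | D ω = d} ∩ {ω | C ω = c})
              * (pr μ (({ω | T ω = 1} ∩ {ω | C ω = c}) ∩ {ω | Y ω = 0})
                + pr μ (({ω | T ω = 1} ∩ {ω | C ω = c}) ∩ {ω | Y ω = 1})) := by
            rw [s2 0, s2 1]
        _ = pr μ ({ω | D ω = d} ∩ {ω | C ω = c}) * pr μ ({ω | T ω = 1} ∩ {ω | C ω = c}) := by
            rw [← pr_split μ hYmeas hY01 (mT1.inter mCc)]
    constructor
    · -- Y part: marginalize over T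
      have s1 : ∀ t : ℝ, (({ω | Y ω = 1} ∩ {ω | D ω = d}) ∩ {ω | C ω = c}) ∩ {ω | T ω = t}
          = ({ω | D ω = d} ∩ {ω | T ω = t} ∩ {ω | Y ω = 1}) ∩ {ω | C ω = c} := by
        intro t; ext ω; simp only [Set.mem_inter_iff, Set.mem_setOf_eq]; tauto
      have s2 : ∀ t : ℝ, ({ω | Y ω = 1} ∩ {ω | C ω = c}) ∩ {ω | T ω = t}
          = ({ω | T ω = t} ∩ {ω | Y ω = 1}) ∩ {ω | C ω = c} := by
        intro t; ext ω; simp only [Set.mem_inter_iff, Set.mem_setOf_eq]; tauto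
      calc pr μ (({ω | Y ω = 1} ∩ {ω | D ω = d}) ∩ {ω | C ω = c}) * pr μ {ω | C ω = c}
          = (pr μ ((({ω | Y ω = 1} ∩ {ω | D ω = d}) ∩ {ω | C ω = c}) ∩ {ω | T ω = 0})
              + pr μ ((({ω | Y ω = 1} ∩ {ω | D ω = d}) ∩ {ω | C ω = c}) ∩ {ω | T ω = 1}))
              * pr μ {ω | C ω = c} := by
            rw [← pr_split μ hTmeas hT01 ((mY1.inter mDd).inter mCc)]
        _ = (pr μ (({ω | D ω = d} ∩ {ω | T ω = 0} ∩ {ω | Y ω = 1}) ∩ {ω | C ω = c})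
              + pr μ (({ω | D ω = d} ∩ {ω | T ω = 1} ∩ {ω | Y ω = 1}) ∩ {ω | C ω = c}))
              * pr μ {ω | C ω = c} := by rw [s1 0, s1 1]
        _ = pr μ ({ω | D ω = d} ∩ {ω | C ω = c})
              * (pr μ (({ω | T ω = 0} ∩ {ω | Y ω = 1}) ∩ {ω | C ω = c})
                + pr μ (({ω | T ω = 1} ∩ {ω | Y ω = 1}) ∩ {ω | C ω = c})) := by
            rw [add_mul, base 0 1, base 1 1]; ring
        _ = pr μ ({ω | D ω = d} ∩ {ω | C ω = c})
              * (pr μ (({ω | Y ω = 1} ∩ {ω | C ω = c}) ∩ {ω | T ω = 0})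
                + pr μ (({ω | Y ω = 1} ∩ {ω | C ω = c}) ∩ {ω | T ω = 1})) := by
            rw [s2 0, s2 1]
        _ = pr μ ({ω | D ω = d} ∩ {ω | C ω = c}) * pr μ ({ω | Y ω = 1} ∩ {ω | C ω = c}) := by
            rw [← pr_split μ hTmeas hT01 (mY1.inter mCc)]
    · -- joint part
      have s1 : ({ω | T ω = 1} ∩ {ω | Y ω = 1} ∩ {ω | D ω = d}) ∩ {ω | C ω = c}
          = ({ω | D ω = d} ∩ {ω | T ω = 1} ∩ {ω | Y ω = 1}) ∩ {ω | C ω = c} := by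
        ext ω; simp only [Set.mem_inter_iff, Set.mem_setOf_eq]; tauto
      rw [s1]
      exact base 1 1
  obtain ⟨k0T, k0Y, k0J⟩ := key 0 (Or.inl rfl)
  obtain ⟨k1T, k1Y, k1J⟩ := key 1 (Or.inr rfl)
  -- splits over C
  have hTD := pr_split μ hCmeas hC01 (mT1.inter mDd)
  have hYD := pr_split μ hCmeas hC01 (mY1.inter mDd)
  have hJD := pr_split μ hCmeas hC01 ((mT1.inter mY1).inter mDd)
  have hPD := pr_split μ hCmeas hC01 mDd
  have hPT := pr_split μ hCmeas hC01 mT1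
  have hPY := pr_split μ hCmeas hC01 mY1
  have hPJ := pr_split μ hCmeas hC01 (mT1.inter mY1)
  have hpsum : pr μ {ω | C ω = 0} + pr μ {ω | C ω = 1} = 1 := by
    have h1 := pr_split μ hCmeas hC01 (MeasurableSet.univ (α := Ω))
    simp only [Set.univ_inter] at h1
    have h2 : pr μ (Set.univ : Set Ω) = 1 := by simp [pr]
    linarith
  -- express the D-conditional quantities
  have e2 : pr μ ({ω | T ω = 1} ∩ {ω | D ω = d})
      = pr μ ({ω | D ω = d} ∩ {ω | C ω = 0}) * pr μ ({ω | T ω = 1} ∩ {ω | C ω = 0})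
          / pr μ {ω | C ω = 0}
        + pr μ ({ω | D ω = d} ∩ {ω | C ω = 1}) * pr μ ({ω | T ω = 1} ∩ {ω | C ω = 1})
          / pr μ {ω | C ω = 1} := by
    have d0 : pr μ (({ω | T ω = 1} ∩ {ω | D ω = d}) ∩ {ω | C ω = 0})
        = pr μ ({ω | D ω = d} ∩ {ω | C ω = 0}) * pr μ ({ω | T ω = 1} ∩ {ω | C ω = 0})
          / pr μ {ω | C ω = 0} := by rw [eq_div_iff hp0']; exact k0T
    have d1 : pr μ (({ω | T ω = 1} ∩ {ω | D ω = d}) ∩ {ω | C ω = 1})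
        = pr μ ({ω | D ω = d} ∩ {ω | C ω = 1}) * pr μ ({ω | T ω = 1} ∩ {ω | C ω = 1})
          / pr μ {ω | C ω = 1} := by rw [eq_div_iff hp1']; exact k1T
    rw [hTD, d0, d1]
  have e3 : pr μ ({ω | Y ω = 1} ∩ {ω | D ω = d})
      = pr μ ({ω | D ω = d} ∩ {ω | C ω = 0}) * pr μ ({ω | Y ω = 1} ∩ {ω | C ω = 0})
          / pr μ {ω | C ω = 0}
        + pr μ ({ω | D ω = d} ∩ {ω | C ω = 1}) * pr μ ({ω | Y ω = 1} ∩ {ω | C ω = 1})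
          / pr μ {ω | C ω = 1} := by
    have d0 : pr μ (({ω | Y ω = 1} ∩ {ω | D ω = d}) ∩ {ω | C ω = 0})
        = pr μ ({ω | D ω = d} ∩ {ω | C ω = 0}) * pr μ ({ω | Y ω = 1} ∩ {ω | C ω = 0})
          / pr μ {ω | C ω = 0} := by rw [eq_div_iff hp0']; exact k0Y
    have d1 : pr μ (({ω | Y ω = 1} ∩ {ω | D ω = d}) ∩ {ω | C ω = 1})
        = pr μ ({ω | D ω = d} ∩ {ω | C ω = 1}) * pr μ ({ω | Y ω = 1} ∩ {ω | C ω = 1})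
          / pr μ {ω | C ω = 1} := by rw [eq_div_iff hp1']; exact k1Y
    rw [hYD, d0, d1]
  have e1 : pr μ ({ω | T ω = 1} ∩ {ω | Y ω = 1} ∩ {ω | D ω = d})
      = pr μ ({ω | D ω = d} ∩ {ω | C ω = 0})
          * pr μ ({ω | T ω = 1} ∩ {ω | Y ω = 1} ∩ {ω | C ω = 0}) / pr μ {ω | C ω = 0}
        + pr μ ({ω | D ω = d} ∩ {ω | C ω = 1})
          * pr μ ({ω | T ω = 1} ∩ {ω | Y ω = 1} ∩ {ω | C ω = 1}) / pr μ {ω | C ω = 1} := by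
    have d0 : pr μ (({ω | T ω = 1} ∩ {ω | Y ω = 1} ∩ {ω | D ω = d}) ∩ {ω | C ω = 0})
        = pr μ ({ω | D ω = d} ∩ {ω | C ω = 0})
          * pr μ ({ω | T ω = 1} ∩ {ω | Y ω = 1} ∩ {ω | C ω = 0}) / pr μ {ω | C ω = 0} := by
      rw [eq_div_iff hp0']; exact k0J
    have d1 : pr μ (({ω | T ω = 1} ∩ {ω | Y ω = 1} ∩ {ω | D ω = d}) ∩ {ω | C ω = 1})
        = pr μ ({ω | D ω = d} ∩ {ω | C ω = 1})
          * pr μ ({ω | T ω = 1} ∩ {ω | Y ω = 1} ∩ {ω | C ω = 1}) / pr μ {ω | C ω = 1} := by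
      rw [eq_div_iff hp1']; exact k1J
    rw [hJD, d0, d1]
  -- independence constraint in split form
  rw [hPJ, hPT, hPY] at hPTY
  have hj1 : pr μ ({ω | T ω = 1} ∩ {ω | Y ω = 1} ∩ {ω | C ω = 1})
      = (pr μ ({ω | T ω = 1} ∩ {ω | C ω = 0}) + pr μ ({ω | T ω = 1} ∩ {ω | C ω = 1}))
        * (pr μ ({ω | Y ω = 1} ∩ {ω | C ω = 0}) + pr μ ({ω | Y ω = 1} ∩ {ω | C ω = 1}))
        - pr μ ({ω | T ω = 1} ∩ {ω | Y ω = 1} ∩ {ω | C ω = 0}) := by linarith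
  have hp1eq : pr μ {ω | C ω = 1} = 1 - pr μ {ω | C ω = 0} := by linarith
  have h1mp0 : (1 : ℝ) - pr μ {ω | C ω = 0} ≠ 0 := by
    rw [← hp1eq]; exact hp1'
  have hKne : pr μ ({ω | D ω = d} ∩ {ω | C ω = 0})
      + pr μ ({ω | D ω = d} ∩ {ω | C ω = 1}) ≠ 0 := by
    rw [← hPD]; exact ne_of_gt hpD
  unfold Δ cpr
  rw [hcov]
  simp only [sub_zero]
  rw [ccov_eq μ hTmeas hYmeas hT01 hY01 mDd, ccov_eq μ hTmeas hYmeas hT01 hY01 mC1,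
    ccov_eq μ hTmeas hYmeas hT01 hY01 mC0]
  rw [e1, e2, e3, hj1, hPD, hp1eq]
  field_simp
  ring


end ColliderYBias
end
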